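/- For every (λ_1,…,λ_p) ∈ (0,∞)^p, the extremal dependence function satisfies ε(λ_1,…,λ_p) = ℓ(b_1,…,b_d), where b_i = σ_i^η λ_{j(i)}^η for each i ∈ I. -/

import Mathlib

open MeasureTheory ProbabilityTheory Real Filter Topology
open scoped ProbabilityTheory

noncomputable section

/-- Marginal Fréchet-type distribution function `F_i(t) = exp(-σ t^(-1/η))` for `t > 0`. -/
def margF (σ η t : ℝ) : ℝ := if 0 < t then Real.exp (-σ * t ^ (-1 / η)) else 0

/-- Joint distribution function of the random vector `X`. -/
def jointF {Ω : Type*} [MeasureSpace Ω] {d : ℕ} (X : Fin d → Ω → ℝ) (t : Fin d → ℝ) : ℝ :=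
  (ℙ {ω | ∀ i, X i ω ≤ t i}).toReal

/-- Exponent function `ℓ(t) = -ln F_X(t)`. -/
def expo {Ω : Type*} [MeasureSpace Ω] {d : ℕ} (X : Fin d → Ω → ℝ) (t : Fin d → ℝ) : ℝ :=
  -Real.log (jointF X t)

/-- Block maximum `M(I_j) = max_{i ∈ I_j} F_i(X_i)`, where `I_j = {i | B i = j}`. -/
def blockMax {Ω : Type*} [MeasureSpace Ω] {d p : ℕ} (B : Fin d → Fin p) (σ : Fin d → ℝ)
    (η : ℝ) (X : Fin d → Ω → ℝ) (j : Fin p) (ω : Ω) : ℝ :=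
  sSup ((fun i => margF (σ i) η (X i ω)) '' {i | B i = j})

/-- Extremal dependence function
`ε(λ₁,…,λ_p) = E(max_j M(I_j)^(λ_j)) / (1 - E(max_j M(I_j)^(λ_j)))`. -/
def epsFun {Ω : Type*} [MeasureSpace Ω] {d p : ℕ} (B : Fin d → Fin p) (σ : Fin d → ℝ)
    (η : ℝ) (X : Fin d → Ω → ℝ) (l : Fin p → ℝ) : ℝ :=
  (∫ ω, ⨆ j, blockMax B σ η X j ω ^ l j ∂ℙ) /
    (1 - ∫ ω, ⨆ j, blockMax B σ η X j ω ^ l j ∂ℙ)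

/-- Single-block extremal dependence function `ε_{I_j}(λ)`. -/
def epsBlock {Ω : Type*} [MeasureSpace Ω] {d p : ℕ} (B : Fin d → Fin p) (σ : Fin d → ℝ)
    (η : ℝ) (X : Fin d → Ω → ℝ) (j : Fin p) (l : ℝ) : ℝ :=
  (∫ ω, blockMax B σ η X j ω ^ l ∂ℙ) / (1 - ∫ ω, blockMax B σ η X j ω ^ l ∂ℙ)

/-!
Write `U = max_j M(I_j)^(λ_j)` and `b_i = σ_i^η λ_{j(i)}^η`. For `0 < u = e^(-s) < 1` the event
`U ≤ u` says `F_i(X_i) ≤ e^(-s/λ_{j(i)})` for every `i`, i.e. that `X` lies in the lower orthant at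
`s^(-η) b`. Homogeneity of `ℓ` turns its probability into `exp(-s ℓ(b)) = u^ℓ(b)`, so `U` has mean
`ℓ(b) / (ℓ(b) + 1)`, and `ε = E U / (1 - E U) = ℓ(b)`.
-/

lemma margF_nonneg (σ η t : ℝ) : 0 ≤ margF σ η t := by
  unfold margF
  split_ifs
  exacts [(exp_pos _).le, le_rfl]

lemma margF_le_one {σ : ℝ} (hσ : 0 ≤ σ) (η t : ℝ) : margF σ η t ≤ 1 := by
  unfold margF
  split_ifs with ht
  · exact exp_le_one_iff.2 (by nlinarith [rpow_nonneg ht.le (-1 / η)])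
  · exact zero_le_one

lemma measurable_margF (σ η : ℝ) : Measurable (margF σ η) :=
  Measurable.ite measurableSet_Ioi (by fun_prop) measurable_const

lemma margF_le_exp_neg_iff {σ η s : ℝ} (hσ : 0 < σ) (hη : 0 < η) (hs : 0 < s) (x : ℝ) :
    margF σ η x ≤ exp (-s) ↔ x ≤ (σ / s) ^ η := by
  unfold margF
  split_ifs with hx
  · have hexp : -1 / η = (-η)⁻¹ := by rw [neg_div, one_div, inv_neg]
    rw [exp_le_exp, neg_mul, neg_le_neg_iff, ← div_le_iff₀' hσ, hexp,
      le_rpow_inv_iff_of_neg (div_pos hs hσ) hx (neg_lt_zero.2 hη), rpow_neg (div_pos hs hσ).le,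
      ← inv_rpow (div_pos hs hσ).le, inv_div]
  · exact iff_of_true (exp_pos _).le ((not_lt.1 hx).trans (rpow_pos_of_pos (div_pos hσ hs) η).le)

lemma Real.iSup_le_iff_of_finite {ι : Type*} [Finite ι] {f : ι → ℝ} {a : ℝ} (ha : 0 ≤ a) :
    ⨆ i, f i ≤ a ↔ ∀ i, f i ≤ a :=
  ⟨fun h i => (le_ciSup (Finite.bddAbove_range f) i).trans h, fun h => Real.iSup_le h ha⟩

lemma rpow_le_exp_neg_iff {x a s : ℝ} (hx : 0 ≤ x) (ha : 0 < a) :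
    x ^ a ≤ exp (-s) ↔ x ≤ exp (-s / a) := by
  rw [← rpow_le_rpow_iff hx (exp_pos _).le ha, ← exp_mul, div_mul_cancel₀ _ ha.ne']

section BlockMax

variable {Ω : Type*} [MeasureSpace Ω] {d p : ℕ} {B : Fin d → Fin p} {σ : Fin d → ℝ} {η : ℝ}
  {X : Fin d → Ω → ℝ}

lemma blockMax_eq_iSup (j : Fin p) (ω : Ω) :
    blockMax B σ η X j ω = ⨆ i : {i // B i = j}, margF (σ i) η (X i ω) :=
  sSup_image'

lemma blockMax_nonneg (j : Fin p) (ω : Ω) : 0 ≤ blockMax B σ η X j ω := by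
  rw [blockMax_eq_iSup]
  exact Real.iSup_nonneg fun _ => margF_nonneg _ _ _

lemma blockMax_le_iff {j : Fin p} {ω : Ω} {a : ℝ} (ha : 0 ≤ a) :
    blockMax B σ η X j ω ≤ a ↔ ∀ i, B i = j → margF (σ i) η (X i ω) ≤ a := by
  rw [blockMax_eq_iSup, Real.iSup_le_iff_of_finite ha, Subtype.forall]

lemma blockMax_le_one (hσ : ∀ i, 0 < σ i) (j : Fin p) (ω : Ω) :
    blockMax B σ η X j ω ≤ 1 :=
  (blockMax_le_iff zero_le_one).2 fun i _ => margF_le_one (hσ i).le _ _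

lemma measurable_blockMax (hX : ∀ i, Measurable (X i)) (j : Fin p) :
    Measurable (blockMax B σ η X j) := by
  rw [funext (blockMax_eq_iSup j)]
  exact Measurable.iSup fun i => (measurable_margF _ η).comp (hX i)

variable (B σ η X) in
def maxBlockPow (l : Fin p → ℝ) (ω : Ω) : ℝ := ⨆ j, blockMax B σ η X j ω ^ l j

variable {l : Fin p → ℝ}

lemma maxBlockPow_nonneg (ω : Ω) : 0 ≤ maxBlockPow B σ η X l ω :=
  Real.iSup_nonneg fun j => rpow_nonneg (blockMax_nonneg j ω) _

lemma maxBlockPow_le_one (hσ : ∀ i, 0 < σ i) (hl : ∀ j, 0 ≤ l j) (ω : Ω) :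
    maxBlockPow B σ η X l ω ≤ 1 :=
  Real.iSup_le (fun j => rpow_le_one (blockMax_nonneg j ω)
    (blockMax_le_one hσ j ω) (hl j)) zero_le_one

lemma measurable_maxBlockPow (hX : ∀ i, Measurable (X i)) :
    Measurable (maxBlockPow B σ η X l) :=
  Measurable.iSup fun j => (measurable_blockMax hX j).pow_const _

lemma maxBlockPow_le_exp_neg_iff (hσ : ∀ i, 0 < σ i) (hη : 0 < η)
    (hl : ∀ j, 0 < l j) {s : ℝ} (hs : 0 < s) (ω : Ω) :
    maxBlockPow B σ η X l ω ≤ exp (-s) ↔ ∀ i, X i ω ≤ (σ i * l (B i) / s) ^ η := by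
  have hblock : ∀ j, blockMax B σ η X j ω ^ l j ≤ exp (-s) ↔
      ∀ i, B i = j → X i ω ≤ (σ i * l j / s) ^ η := fun j => by
    rw [rpow_le_exp_neg_iff (blockMax_nonneg j ω) (hl j), neg_div,
      blockMax_le_iff (exp_pos _).le]
    refine forall₂_congr fun i _ => ?_
    rw [margF_le_exp_neg_iff (hσ i) hη (div_pos hs (hl j)), div_div_eq_mul_div]
  rw [maxBlockPow, Real.iSup_le_iff_of_finite (exp_pos _).le]
  simp_rw [hblock]
  exact ⟨fun h i => h (B i) i rfl, fun h j i hi => hi ▸ h i⟩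

end BlockMax

lemma expo_nonneg {Ω : Type*} [MeasureSpace Ω] [IsProbabilityMeasure (ℙ : Measure Ω)] {d : ℕ}
    (X : Fin d → Ω → ℝ) (t : Fin d → ℝ) : 0 ≤ expo X t :=
  neg_nonneg.2 (log_nonpos ENNReal.toReal_nonneg measureReal_le_one)

lemma measureReal_maxBlockPow_le {Ω : Type*} [MeasureSpace Ω] {d p : ℕ}
    {X : Fin d → Ω → ℝ} {σ : Fin d → ℝ} (hσ : ∀ i, 0 < σ i) {η : ℝ} (hη : 0 < η)
    (hpos : ∀ t : Fin d → ℝ, (∀ i, 0 < t i) → 0 < jointF X t)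
    (hhom : ∀ c : ℝ, 0 < c → ∀ t : Fin d → ℝ, (∀ i, 0 < t i) →
      expo X (fun i => c * t i) = c ^ (-1 / η) * expo X t)
    (B : Fin d → Fin p) {l : Fin p → ℝ} (hl : ∀ j, 0 < l j) {u : ℝ} (hu0 : 0 < u) (hu1 : u < 1) :
    (ℙ : Measure Ω).real {ω | maxBlockPow B σ η X l ω ≤ u} =
      u ^ expo X (fun i => σ i ^ η * l (B i) ^ η) := by
  set b : Fin d → ℝ := fun i => σ i ^ η * l (B i) ^ η
  have hb : ∀ i, 0 < b i := fun i => mul_pos (rpow_pos_of_pos (hσ i) η) (rpow_pos_of_pos (hl _) η)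
  obtain ⟨s, hs, rfl⟩ : ∃ s, 0 < s ∧ u = exp (-s) :=
    ⟨-log u, neg_pos.2 (log_neg hu0 hu1), by rw [neg_neg, exp_log hu0]⟩
  have hc : 0 < s ^ (-η) := rpow_pos_of_pos hs _
  have horthant : {ω | maxBlockPow B σ η X l ω ≤ exp (-s)} =
      {ω | ∀ i, X i ω ≤ s ^ (-η) * b i} := by
    ext ω
    refine (maxBlockPow_le_exp_neg_iff hσ hη hl hs ω).trans (forall_congr' fun i => ?_)
    rw [div_rpow (mul_pos (hσ i) (hl _)).le hs.le, mul_rpow (hσ i).le (hl (B i)).le,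
      rpow_neg hs.le, div_eq_inv_mul]
  have hpow : (s ^ (-η)) ^ (-1 / η) = s := by
    rw [← rpow_mul hs.le, show -η * (-1 / η) = 1 by field_simp, rpow_one]
  calc (ℙ : Measure Ω).real {ω | maxBlockPow B σ η X l ω ≤ exp (-s)}
      = jointF X (fun i => s ^ (-η) * b i) := by rw [horthant]; rfl
    _ = exp (-expo X (fun i => s ^ (-η) * b i)) := by
      rw [expo, neg_neg, exp_log (hpos _ fun i => mul_pos hc (hb i))]
    _ = exp (-s) ^ expo X b := by
      rw [hhom _ hc b hb, hpow, rpow_def_of_pos (exp_pos _), log_exp, neg_mul]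

lemma integral_eq_div_add_one_of_measureReal_le_eq_rpow {Ω : Type*} [MeasurableSpace Ω]
    {μ : Measure Ω} [IsProbabilityMeasure μ] {Y : Ω → ℝ} (hY : Measurable Y)
    (hY0 : ∀ ω, 0 ≤ Y ω) (hY1 : ∀ ω, Y ω ≤ 1) {θ : ℝ} (hθ : -1 < θ)
    (hcdf : ∀ u, 0 < u → u < 1 → μ.real {ω | Y ω ≤ u} = u ^ θ) :
    ∫ ω, Y ω ∂μ = θ / (θ + 1) := by
  have hint : Integrable Y μ :=
    (integrable_const (1 : ℝ)).mono' hY.aestronglyMeasurable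
      (ae_of_all _ fun ω => by rw [norm_of_nonneg (hY0 ω)]; exact hY1 ω)
  have htail : ∀ u ∈ Set.Ioi (0 : ℝ),
      μ.real {ω | u < Y ω} = Set.indicator (Set.Ioo 0 1) (fun u => 1 - u ^ θ) u := by
    intro u hu
    rcases lt_or_ge u 1 with hu1 | hu1
    · have hcompl : {ω | u < Y ω} = {ω | Y ω ≤ u}ᶜ := by ext; simp
      rw [Set.indicator_of_mem (Set.mem_Ioo.2 ⟨hu, hu1⟩), hcompl,
        probReal_compl_eq_one_sub (measurableSet_le hY measurable_const), hcdf u hu hu1]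
    · have hempty : {ω | u < Y ω} = ∅ :=
        Set.eq_empty_of_forall_notMem fun ω h => (hY1 ω).not_gt (hu1.trans_lt h)
      rw [Set.indicator_of_notMem fun h => hu1.not_gt h.2, hempty, measureReal_empty]
  have hθ1 : θ + 1 ≠ 0 := by linarith
  rw [hint.integral_eq_integral_meas_lt (ae_of_all _ hY0),
    setIntegral_congr_fun measurableSet_Ioi htail, setIntegral_indicator measurableSet_Ioo,
    Set.inter_eq_self_of_subset_right Set.Ioo_subset_Ioi_self, ← integral_Ioc_eq_integral_Ioo,
    ← intervalIntegral.integral_of_le zero_le_one,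
    intervalIntegral.integral_sub intervalIntegrable_const
      (intervalIntegral.intervalIntegrable_rpow' hθ),
    intervalIntegral.integral_const, integral_rpow (Or.inl hθ), one_rpow, zero_rpow hθ1]
  field_simp
  ring

theorem statement4_general
    {Ω : Type*} [MeasureSpace Ω] [IsProbabilityMeasure (ℙ : Measure Ω)]
    {d p : ℕ}
    (X : Fin d → Ω → ℝ) (hX : ∀ i, Measurable (X i))
    (σ : Fin d → ℝ) (hσ : ∀ i, 0 < σ i)
    (η : ℝ) (hη0 : 0 < η)
    (hpos : ∀ t : Fin d → ℝ, (∀ i, 0 < t i) → 0 < jointF X t)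
    (hhom : ∀ c : ℝ, 0 < c → ∀ t : Fin d → ℝ, (∀ i, 0 < t i) →
      expo X (fun i => c * t i) = c ^ (-1 / η) * expo X t)
    (B : Fin d → Fin p)
    (l : Fin p → ℝ) (hl : ∀ j, 0 < l j) :
    epsFun B σ η X l = expo X (fun i => σ i ^ η * l (B i) ^ η) := by
  set θ := expo X (fun i => σ i ^ η * l (B i) ^ η)
  have hθ : 0 ≤ θ := expo_nonneg X _
  have hmean : ∫ ω, maxBlockPow B σ η X l ω ∂ℙ = θ / (θ + 1) :=
    integral_eq_div_add_one_of_measureReal_le_eq_rpow (measurable_maxBlockPow hX)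
      maxBlockPow_nonneg (maxBlockPow_le_one hσ fun j => (hl j).le)
      (by linarith) fun _ hu0 hu1 => measureReal_maxBlockPow_le hσ hη0 hpos hhom B hl hu0 hu1
  calc epsFun B σ η X l
      = (∫ ω, maxBlockPow B σ η X l ω ∂ℙ) / (1 - ∫ ω, maxBlockPow B σ η X l ω ∂ℙ) := rfl
    _ = θ := by
      rw [hmean]
      field_simp
      ring

theorem statement4
    {Ω : Type*} [MeasureSpace Ω] [IsProbabilityMeasure (ℙ : Measure Ω)]
    {d p : ℕ} (hd : 0 < d) (hp : 0 < p)
    (X : Fin d → Ω → ℝ) (hX : ∀ i, Measurable (X i))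
    (σ : Fin d → ℝ) (hσ : ∀ i, 0 < σ i)
    (η : ℝ) (hη0 : 0 < η) (hη1 : η ≤ 1)
    (hmarg : ∀ i, ∀ t : ℝ, 0 < t →
      ℙ {ω | X i ω ≤ t} = ENNReal.ofReal (Real.exp (-σ i * t ^ (-1 / η))))
    (hpos : ∀ t : Fin d → ℝ, (∀ i, 0 < t i) → 0 < jointF X t)
    (hhom : ∀ c : ℝ, 0 < c → ∀ t : Fin d → ℝ, (∀ i, 0 < t i) →
      expo X (fun i => c * t i) = c ^ (-1 / η) * expo X t)
    (B : Fin d → Fin p) (hB : Function.Surjective B)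
    (l : Fin p → ℝ) (hl : ∀ j, 0 < l j) :
    epsFun B σ η X l = expo X (fun i => σ i ^ η * l (B i) ^ η) :=
  statement4_general X hX σ hσ η hη0 hpos hhom B l hl
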